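/- arXiv:1901.07395 — 4 statements merged into one kernel-verified Lean document; each statement's English description precedes it below -/
import Mathlib

section
/- Let p₁ be a real k×m matrix of rank k, p₂ a real l×n matrix of rank l, A a real k×m matrix of rank k, D a real l×n matrix of rank l, and let B be an arbitrary real k×n matrix and C an arbitrary real l×m matrix. Then there exist an invertible m×m real matrix H, an invertible n×n real matrix Q, an m×n real matrix M and an n×m real matrix N such that Matrix.fromBlocks p₁ 0 0 p₂ * Matrix.fromBlocks H M N Q = Matrix.fromBlocks A B C D; equivalently p₁*H = A, p₁*M = B, p₂*N = C, and p₂*Q = D. (This is the surjectivity computation proving that the orbit map (a_p) is surjective on points, i.e. that GL(m|n) acts transitively on the ν-Grassmannian ₙG_{k|l}(m|n).) -/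
open Matrix LinearMap

lemma surj_of_rank {k m : ℕ} (p : Matrix (Fin k) (Fin m) ℝ) (hp : p.rank = k) :
    Function.Surjective p.mulVecLin := by
  rw [← LinearMap.range_eq_top]
  apply Submodule.eq_top_of_finrank_eq
  rw [← Matrix.rank, hp, Module.finrank_pi, Fintype.card_fin]

lemma exists_equiv {k m : ℕ} (f g : (Fin m → ℝ) →ₗ[ℝ] (Fin k → ℝ))
    (hf : Function.Surjective f) (hg : Function.Surjective g) :
    ∃ e : (Fin m → ℝ) ≃ₗ[ℝ] (Fin m → ℝ), f ∘ₗ e.toLinearMap = g := by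
  obtain ⟨rf, hrf⟩ := f.exists_rightInverse_of_surjective (LinearMap.range_eq_top.2 hf)
  obtain ⟨rg, hrg⟩ := g.exists_rightInverse_of_surjective (LinearMap.range_eq_top.2 hg)
  have hrf' : ∀ y, f (rf y) = y := fun y => congrFun (congrArg DFunLike.coe hrf) y
  have hrg' : ∀ y, g (rg y) = y := fun y => congrFun (congrArg DFunLike.coe hrg) y
  have hker : Module.finrank ℝ (LinearMap.ker g) = Module.finrank ℝ (LinearMap.ker f) := by
    have h1 := f.finrank_range_add_finrank_ker
    have h2 := g.finrank_range_add_finrank_ker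
    rw [LinearMap.range_eq_top.2 hf, finrank_top] at h1
    rw [LinearMap.range_eq_top.2 hg, finrank_top] at h2
    omega
  let φ : (LinearMap.ker g) ≃ₗ[ℝ] (LinearMap.ker f) := LinearEquiv.ofFinrankEq _ _ hker
  let idm : (Fin m → ℝ) →ₗ[ℝ] (Fin m → ℝ) := LinearMap.id
  have hπg : ∀ x, (idm - rg ∘ₗ g) x ∈ LinearMap.ker g := by
    intro x; simp [idm, LinearMap.mem_ker, hrg' (g x)]
  have hπf : ∀ x, (idm - rf ∘ₗ f) x ∈ LinearMap.ker f := by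
    intro x; simp [idm, LinearMap.mem_ker, hrf' (f x)]
  let πg : (Fin m → ℝ) →ₗ[ℝ] LinearMap.ker g :=
    LinearMap.codRestrict _ (idm - rg ∘ₗ g) hπg
  let πf : (Fin m → ℝ) →ₗ[ℝ] LinearMap.ker f :=
    LinearMap.codRestrict _ (idm - rf ∘ₗ f) hπf
  let E : (Fin m → ℝ) →ₗ[ℝ] (Fin m → ℝ) :=
    (LinearMap.ker f).subtype ∘ₗ φ.toLinearMap ∘ₗ πg + rf ∘ₗ g
  let E' : (Fin m → ℝ) →ₗ[ℝ] (Fin m → ℝ) :=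
    (LinearMap.ker g).subtype ∘ₗ φ.symm.toLinearMap ∘ₗ πf + rg ∘ₗ f
  have hE : ∀ x, E x = (φ (πg x) : Fin m → ℝ) + rf (g x) := fun x => rfl
  have hE' : ∀ x, E' x = (φ.symm (πf x) : Fin m → ℝ) + rg (f x) := fun x => rfl
  have hπgx : ∀ x, (πg x : Fin m → ℝ) = x - rg (g x) := fun x => rfl
  have hπfx : ∀ x, (πf x : Fin m → ℝ) = x - rf (f x) := fun x => rfl
  have hfE : ∀ x, f (E x) = g x := by
    intro x
    have h1 : f ((φ (πg x) : Fin m → ℝ)) = 0 := (φ (πg x)).2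
    rw [hE x, map_add, h1, hrf' (g x), zero_add]
  have hgE' : ∀ x, g (E' x) = f x := by
    intro x
    have h1 : g ((φ.symm (πf x) : Fin m → ℝ)) = 0 := (φ.symm (πf x)).2
    rw [hE' x, map_add, h1, hrg' (f x), zero_add]
  have hleft : ∀ x, E' (E x) = x := by
    intro x
    have key : πf (E x) = φ (πg x) := by
      apply Subtype.ext
      rw [hπfx (E x), hfE x, hE x]
      abel
    rw [hE' (E x), key, LinearEquiv.symm_apply_apply, hfE x, hπgx]
    abel
  have hright : ∀ x, E (E' x) = x := by
    intro x
    have key : πg (E' x) = φ.symm (πf x) := by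
      apply Subtype.ext
      rw [hπgx (E' x), hgE' x, hE' x]
      abel
    rw [hE (E' x), key, LinearEquiv.apply_symm_apply, hgE' x, hπfx]
    abel
  exact ⟨LinearEquiv.ofLinear E E' (LinearMap.ext hright) (LinearMap.ext hleft),
    LinearMap.ext hfE⟩

lemma exists_invertible_factor {k m : ℕ} (p A : Matrix (Fin k) (Fin m) ℝ)
    (hp : p.rank = k) (hA : A.rank = k) :
    ∃ H : Matrix (Fin m) (Fin m) ℝ, IsUnit H.det ∧ p * H = A := by
  obtain ⟨e, he⟩ := exists_equiv p.mulVecLin A.mulVecLin (surj_of_rank p hp) (surj_of_rank A hA)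
  refine ⟨LinearMap.toMatrix' e.toLinearMap, ?_, ?_⟩
  · apply Matrix.isUnit_det_of_right_inverse (B := LinearMap.toMatrix' e.symm.toLinearMap)
    have h1 : e.toLinearMap ∘ₗ e.symm.toLinearMap = LinearMap.id :=
      LinearMap.ext fun x => e.apply_symm_apply x
    rw [← LinearMap.toMatrix'_comp, h1, LinearMap.toMatrix'_id]
  · apply Matrix.toLin'.injective
    rw [Matrix.toLin'_apply', Matrix.toLin'_apply', Matrix.mulVecLin_mul,
      ← Matrix.toLin'_apply' (LinearMap.toMatrix' e.toLinearMap), Matrix.toLin'_toMatrix']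
    exact he

lemma exists_arbitrary_factor {k m n : ℕ} (p : Matrix (Fin k) (Fin m) ℝ)
    (hp : p.rank = k) (B : Matrix (Fin k) (Fin n) ℝ) :
    ∃ M : Matrix (Fin m) (Fin n) ℝ, p * M = B := by
  obtain ⟨r, hr⟩ := p.mulVecLin.exists_rightInverse_of_surjective
    (LinearMap.range_eq_top.2 (surj_of_rank p hp))
  refine ⟨LinearMap.toMatrix' (r ∘ₗ B.mulVecLin), ?_⟩
  apply Matrix.toLin'.injective
  rw [Matrix.toLin'_apply', Matrix.toLin'_apply', Matrix.mulVecLin_mul,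
    ← Matrix.toLin'_apply' (LinearMap.toMatrix' (r ∘ₗ B.mulVecLin)), Matrix.toLin'_toMatrix',
    ← LinearMap.comp_assoc, hr, LinearMap.id_comp]



/-- The surjectivity computation for the orbit map: given full row rank matrices
`p₁, A` (rank `k`) and `p₂, D` (rank `l`) and arbitrary `B, C`, there are invertible
`H, Q` and arbitrary `M, N` with
`fromBlocks p₁ 0 0 p₂ * fromBlocks H M N Q = fromBlocks A B C D`,
equivalently `p₁*H = A`, `p₁*M = B`, `p₂*N = C`, `p₂*Q = D`. -/
theorem orbit_map_surjective_blocks (k l m n : ℕ)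
    (p₁ : Matrix (Fin k) (Fin m) ℝ) (p₂ : Matrix (Fin l) (Fin n) ℝ)
    (A : Matrix (Fin k) (Fin m) ℝ) (D : Matrix (Fin l) (Fin n) ℝ)
    (B : Matrix (Fin k) (Fin n) ℝ) (C : Matrix (Fin l) (Fin m) ℝ)
    (hp₁ : p₁.rank = k) (hp₂ : p₂.rank = l)
    (hA : A.rank = k) (hD : D.rank = l) :
    ∃ (H : Matrix (Fin m) (Fin m) ℝ) (Q : Matrix (Fin n) (Fin n) ℝ)
      (M : Matrix (Fin m) (Fin n) ℝ) (N : Matrix (Fin n) (Fin m) ℝ),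
      IsUnit H.det ∧ IsUnit Q.det ∧
      Matrix.fromBlocks p₁ 0 0 p₂ * Matrix.fromBlocks H M N Q =
        Matrix.fromBlocks A B C D ∧
      p₁ * H = A ∧ p₁ * M = B ∧ p₂ * N = C ∧ p₂ * Q = D := by
  obtain ⟨H, hHdet, hH⟩ := exists_invertible_factor p₁ A hp₁ hA
  obtain ⟨Q, hQdet, hQ⟩ := exists_invertible_factor p₂ D hp₂ hD
  obtain ⟨M, hM⟩ := exists_arbitrary_factor p₁ hp₁ B
  obtain ⟨N, hN⟩ := exists_arbitrary_factor p₂ hp₂ C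
  refine ⟨H, Q, M, N, hHdet, hQdet, ?_, hH, hM, hN, hQ⟩
  rw [Matrix.fromBlocks_multiply]
  simp [hH, hM, hN, hQ]
end

section
/- Let R be a commutative ring, A an m×m matrix over R, D an n×n matrix over R, and let B (m×n) and C (n×m) be matrices over R all of whose entries are nilpotent. Then the block matrix Matrix.fromBlocks A B C D is invertible if and only if both A and D are invertible. (This characterizes the T-points of the super Lie group GL(m|n): they are the even (m|n)×(m|n) supermatrices (A B; C D) with A,D having even entries, B,C having odd (hence nilpotent) entries, which are invertible exactly when the diagonal blocks are.) -/
lemma nilpotent_det_diff_aux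
    (R : Type*) [CommRing R] (m n : ℕ)
    (A : Matrix (Fin m) (Fin m) R) (D : Matrix (Fin n) (Fin n) R)
    (B : Matrix (Fin m) (Fin n) R) (C : Matrix (Fin n) (Fin m) R)
    (hB : ∀ i j, IsNilpotent (B i j)) (hC : ∀ i j, IsNilpotent (C i j)) :
    IsNilpotent ((Matrix.fromBlocks A B C D).det - A.det * D.det) := by
  rw [← mem_nilradical, ← Ideal.Quotient.eq_zero_iff_mem]
  set π := Ideal.Quotient.mk (nilradical R)
  have h0B : B.map π = 0 := by
    ext i j
    exact (Ideal.Quotient.eq_zero_iff_mem).mpr (mem_nilradical.mpr (hB i j))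
  have h0C : C.map π = 0 := by
    ext i j
    exact (Ideal.Quotient.eq_zero_iff_mem).mpr (mem_nilradical.mpr (hC i j))
  have : π (Matrix.fromBlocks A B C D).det = π (A.det * D.det) := by
    rw [RingHom.map_det, RingHom.mapMatrix_apply, Matrix.fromBlocks_map, h0B, h0C,
      Matrix.det_fromBlocks_zero₁₂, map_mul, RingHom.map_det, RingHom.map_det,
      RingHom.mapMatrix_apply, RingHom.mapMatrix_apply]
  simp [map_sub, this]

/-- A block matrix `(A B; C D)` whose off-diagonal blocks `B, C` have nilpotent entries
is invertible iff both diagonal blocks `A` and `D` are invertible. -/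
theorem fromBlocks_isUnit_det_iff_of_nilpotent_offdiag
    (R : Type*) [CommRing R] (m n : ℕ)
    (A : Matrix (Fin m) (Fin m) R) (D : Matrix (Fin n) (Fin n) R)
    (B : Matrix (Fin m) (Fin n) R) (C : Matrix (Fin n) (Fin m) R)
    (hB : ∀ i j, IsNilpotent (B i j)) (hC : ∀ i j, IsNilpotent (C i j)) :
    IsUnit (Matrix.fromBlocks A B C D).det ↔ IsUnit A.det ∧ IsUnit D.det := by
  have hnil := nilpotent_det_diff_aux R m n A D B C hB hC
  have key : IsUnit (Matrix.fromBlocks A B C D).det ↔ IsUnit (A.det * D.det) := by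
    constructor
    · intro h
      have := hnil.neg.isUnit_add_right_of_commute h (Commute.all _ _)
      simpa using this
    · intro h
      have := hnil.isUnit_add_right_of_commute h (Commute.all _ _)
      simpa using this
  rw [key, IsUnit.mul_iff]
end

section
/- Let R be a commutative ring, A a k×m matrix over R, and f, g, h : Fin k → Fin m column selections such that the k×k submatrices A_f, A_g and A_h are all invertible. Writing N_f = A_f⁻¹ * A, N_g = A_g⁻¹ * A and N_h = A_h⁻¹ * A for the corresponding normalized chart matrices, one has ((N_f)_h)⁻¹ * N_f = N_h and ((N_g)_h)⁻¹ * N_g = N_h; in particular, transitioning the chart representative from f to g and then from g to h yields the same result as transitioning from f to h directly. (This is the matrix-level content of part (3) of Proposition 2.1, the cocycle condition g*_{I|R,J|S} ∘ g*_{J|S,T|P} ∘ g*_{T|P,I|R} = id for the gluing maps of the ν-Grassmannian.) -/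
lemma submatrix_mul_left {R : Type*} [CommRing R] {k m : ℕ}
    (B : Matrix (Fin k) (Fin k) R) (A : Matrix (Fin k) (Fin m) R) (h : Fin k → Fin m) :
    (B * A).submatrix id h = B * A.submatrix id h := by
  ext i j
  simp [Matrix.mul_apply, Matrix.submatrix_apply]

lemma chart_transition_aux {R : Type*} [CommRing R] {k m : ℕ}
    (A : Matrix (Fin k) (Fin m) R) (f h : Fin k → Fin m)
    (hf : IsUnit (A.submatrix id f).det) (hh : IsUnit (A.submatrix id h).det) :
    (((A.submatrix id f)⁻¹ * A).submatrix id h)⁻¹ * ((A.submatrix id f)⁻¹ * A)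
        = (A.submatrix id h)⁻¹ * A := by
  rw [submatrix_mul_left, Matrix.mul_inv_rev, Matrix.nonsing_inv_nonsing_inv _ hf,
    Matrix.mul_assoc, ← Matrix.mul_assoc (A.submatrix id f),
    Matrix.mul_nonsing_inv _ hf, Matrix.one_mul]

/-- Part (3) of Proposition 2.1 (cocycle condition) at the matrix level:
with `N_f = A_f⁻¹ * A`, `N_g = A_g⁻¹ * A`, `N_h = A_h⁻¹ * A`, one has
`((N_f)_h)⁻¹ * N_f = N_h` and `((N_g)_h)⁻¹ * N_g = N_h`. -/
theorem chart_transition_cocycle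
    (R : Type*) [CommRing R] (k m : ℕ)
    (A : Matrix (Fin k) (Fin m) R) (f g h : Fin k → Fin m)
    (hf : IsUnit (A.submatrix id f).det) (hg : IsUnit (A.submatrix id g).det)
    (hh : IsUnit (A.submatrix id h).det) :
    ((((A.submatrix id f)⁻¹ * A).submatrix id h)⁻¹ * ((A.submatrix id f)⁻¹ * A)
        = (A.submatrix id h)⁻¹ * A) ∧
    ((((A.submatrix id g)⁻¹ * A).submatrix id h)⁻¹ * ((A.submatrix id g)⁻¹ * A)
        = (A.submatrix id h)⁻¹ * A) := by
  exact ⟨chart_transition_aux A f h hf hh, chart_transition_aux A g h hg hh⟩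
end

section
/- Let R be a commutative ring, X a k×m matrix over R, and P, Q invertible m×m matrices over R. Let f, g : Fin k → Fin m be column selections such that the k×k submatrices (X*P)_f and (X*P*Q)_g are invertible. Then ((((X*P)_f⁻¹ * X * P) * Q)_g)⁻¹ * ((X*P)_f⁻¹ * X * P * Q) = (X*P*Q)_g⁻¹ * (X * P * Q). (This is the matrix-level compatibility (𝒫·P)·Q = 𝒫·(PQ) of the locally defined chart actions A^{J|S}_{I|R} of GL(m|n) on the ν-Grassmannian, underlying Proposition 3.2 that the local actions glue to a global action.) -/
lemma submatrix_id_mul {R : Type*} [CommRing R] {k m : ℕ}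
    (B : Matrix (Fin k) (Fin k) R) (M : Matrix (Fin k) (Fin m) R)
    (g : Fin k → Fin m) :
    (B * M).submatrix id g = B * M.submatrix id g := by
  ext i j
  simp [Matrix.mul_apply, Matrix.submatrix]

/-- Matrix-level compatibility `(𝒫·P)·Q = 𝒫·(P*Q)` of the locally defined chart
actions of GL on the ν-Grassmannian (Proposition 3.2). -/
theorem chart_action_compatible
    (R : Type*) [CommRing R] (k m : ℕ)
    (X : Matrix (Fin k) (Fin m) R) (P Q : Matrix (Fin m) (Fin m) R)
    (hP : IsUnit P.det) (hQ : IsUnit Q.det)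
    (f g : Fin k → Fin m)
    (hf : IsUnit ((X * P).submatrix id f).det)
    (hg : IsUnit ((X * P * Q).submatrix id g).det) :
    (((((X * P).submatrix id f)⁻¹ * X * P) * Q).submatrix id g)⁻¹ *
        (((X * P).submatrix id f)⁻¹ * X * P * Q) =
      ((X * P * Q).submatrix id g)⁻¹ * (X * P * Q) := by
  set A := (X * P).submatrix id f with hA
  have h1 : (A⁻¹ * X * P * Q).submatrix id g = A⁻¹ * (X * P * Q).submatrix id g := by
    rw [show A⁻¹ * X * P * Q = A⁻¹ * (X * P * Q) by
      simp only [Matrix.mul_assoc], submatrix_id_mul]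
  calc ((A⁻¹ * X * P * Q).submatrix id g)⁻¹ * (A⁻¹ * X * P * Q)
      = ((X * P * Q).submatrix id g)⁻¹ * A⁻¹⁻¹ * (A⁻¹ * (X * P * Q)) := by
        rw [h1, Matrix.mul_inv_rev]
        simp only [Matrix.mul_assoc]
    _ = ((X * P * Q).submatrix id g)⁻¹ * (X * P * Q) := by
        rw [Matrix.nonsing_inv_nonsing_inv A hf, ← Matrix.mul_assoc,
          Matrix.mul_assoc _ A, Matrix.mul_nonsing_inv A hf, Matrix.mul_one]
end
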